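/- With S(3), the partition {A, B, C}, and τ as above, the relation → is quantifier-free definable from (τ, A, B, C): for all x, y ∈ S, x → y iff (x, y lie in the same part and x τ y) or ((x,y) ∈ (C×A) ∪ (B×C) ∪ (A×B) and ¬(x τ y)). -/
import Mathlib


/-- Points of the unit circle with rational angle. -/
def Scirc : Set ℂ := {z | ∃ q : ℚ, z = Complex.exp (q * Complex.I)}

/-- The `S(3)` relation: `e^{q₁i} → e^{q₂i}` iff
`q₂ - q₁ ∈ ⋃_{k∈ℤ} (2kπ, 2kπ + 2π/3)`. -/
def Arrow3 (x y : ℂ) : Prop :=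
  ∃ q₁ q₂ : ℚ, x = Complex.exp (q₁ * Complex.I) ∧ y = Complex.exp (q₂ * Complex.I) ∧
    ∃ k : ℤ, 2 * (k : ℝ) * Real.pi < (q₂ : ℝ) - (q₁ : ℝ) ∧
      (q₂ : ℝ) - (q₁ : ℝ) < 2 * (k : ℝ) * Real.pi + 2 * Real.pi / 3

/-- The incomparability relation of `S(3)`. -/
def Par3 (x y : ℂ) : Prop := x ≠ y ∧ ¬ Arrow3 x y ∧ ¬ Arrow3 y x

/-- The arc of angles in `⋃_k (π/2 + 2kπ, 7π/6 + 2kπ)`. -/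
def ArcA : Set ℂ :=
  {z | ∃ q : ℚ, z = Complex.exp (q * Complex.I) ∧
    ∃ k : ℤ, Real.pi / 2 + 2 * (k : ℝ) * Real.pi < (q : ℝ) ∧
      (q : ℝ) < 7 * Real.pi / 6 + 2 * (k : ℝ) * Real.pi}

/-- The arc of angles in `⋃_k (7π/6 + 2kπ, 11π/6 + 2kπ)`. -/
def ArcB : Set ℂ :=
  {z | ∃ q : ℚ, z = Complex.exp (q * Complex.I) ∧
    ∃ k : ℤ, 7 * Real.pi / 6 + 2 * (k : ℝ) * Real.pi < (q : ℝ) ∧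
      (q : ℝ) < 11 * Real.pi / 6 + 2 * (k : ℝ) * Real.pi}

/-- The arc of angles in `⋃_k (11π/6 + 2kπ, 15π/6 + 2kπ)`. -/
def ArcC : Set ℂ :=
  {z | ∃ q : ℚ, z = Complex.exp (q * Complex.I) ∧
    ∃ k : ℤ, 11 * Real.pi / 6 + 2 * (k : ℝ) * Real.pi < (q : ℝ) ∧
      (q : ℝ) < 15 * Real.pi / 6 + 2 * (k : ℝ) * Real.pi}

/-- The linear order `τ`: `→` within parts, `→⁻¹` on `(A×C) ∪ (C×B) ∪ (B×A)`,
and `∥` on `(C×A) ∪ (B×C) ∪ (A×B)`. -/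
def Tau (x y : ℂ) : Prop :=
  (((x ∈ ArcA ∧ y ∈ ArcA) ∨ (x ∈ ArcB ∧ y ∈ ArcB) ∨ (x ∈ ArcC ∧ y ∈ ArcC)) ∧ Arrow3 x y) ∨
  (((x ∈ ArcA ∧ y ∈ ArcC) ∨ (x ∈ ArcC ∧ y ∈ ArcB) ∨ (x ∈ ArcB ∧ y ∈ ArcA)) ∧ Arrow3 y x) ∨
  (((x ∈ ArcC ∧ y ∈ ArcA) ∨ (x ∈ ArcB ∧ y ∈ ArcC) ∨ (x ∈ ArcA ∧ y ∈ ArcB)) ∧ Par3 x y)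

section ArrowAux

private def PA (r : ℝ) : Prop := ∃ k : ℤ,
  Real.pi / 2 + 2 * (k : ℝ) * Real.pi < r ∧ r < 7 * Real.pi / 6 + 2 * (k : ℝ) * Real.pi
private def PB (r : ℝ) : Prop := ∃ k : ℤ,
  7 * Real.pi / 6 + 2 * (k : ℝ) * Real.pi < r ∧ r < 11 * Real.pi / 6 + 2 * (k : ℝ) * Real.pi
private def PC (r : ℝ) : Prop := ∃ k : ℤ,
  11 * Real.pi / 6 + 2 * (k : ℝ) * Real.pi < r ∧ r < 15 * Real.pi / 6 + 2 * (k : ℝ) * Real.pi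
private def Arr (d : ℝ) : Prop := ∃ k : ℤ,
  2 * (k : ℝ) * Real.pi < d ∧ d < 2 * (k : ℝ) * Real.pi + 2 * Real.pi / 3

private lemma expq_inj {q1 q2 : ℚ}
    (h : Complex.exp (q1 * Complex.I) = Complex.exp (q2 * Complex.I)) : q1 = q2 := by
  rw [Complex.exp_eq_exp_iff_exists_int] at h
  obtain ⟨n, hn⟩ := h
  have him := congrArg Complex.im hn
  simp at him
  rcases eq_or_ne n 0 with h0 | h0
  · subst h0; simp at him; exact_mod_cast him
  · exfalso
    have hn' : ((2 * n : ℚ) : ℝ) ≠ 0 := by simpa using h0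
    have : (((q1 - q2) / (2 * n) : ℚ) : ℝ) = Real.pi := by
      push_cast
      field_simp
      push_cast at hn' ⊢
      linarith
    exact irrational_pi ⟨_, this⟩

private lemma rat_ne_pi_mul (q a : ℚ) (ha : a ≠ 0) : (q : ℝ) ≠ (a : ℝ) * Real.pi := by
  intro h
  have : (((q / a) : ℚ) : ℝ) = Real.pi := by
    push_cast; rw [h]; field_simp
  exact irrational_pi ⟨_, this⟩

private lemma int_lt_aux {a b : ℤ} (h : 2 * (a : ℝ) * Real.pi < 2 * (b : ℝ) * Real.pi) :
    a < b := by
  by_contra h'; push_neg at h'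
  have : (b : ℝ) ≤ a := by exact_mod_cast h'
  nlinarith [Real.pi_pos]

private lemma int_le_aux {a b : ℤ}
    (h : 2 * (a : ℝ) * Real.pi < 2 * (b : ℝ) * Real.pi + 2 * Real.pi) : a ≤ b := by
  by_contra h'; push_neg at h'
  have : (b : ℝ) + 1 ≤ a := by exact_mod_cast h'
  nlinarith [Real.pi_pos]

private lemma cover (q : ℚ) : PA q ∨ PB q ∨ PC q := by
  set k : ℤ := ⌊((q : ℝ) - Real.pi / 2) / (2 * Real.pi)⌋ with hk
  have hpi := Real.pi_pos
  have h2pi : (0 : ℝ) < 2 * Real.pi := by linarith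
  have h1 : (k : ℝ) ≤ ((q : ℝ) - Real.pi / 2) / (2 * Real.pi) := Int.floor_le _
  have h2 : ((q : ℝ) - Real.pi / 2) / (2 * Real.pi) < k + 1 := Int.lt_floor_add_one _
  have h1' : (k : ℝ) * (2 * Real.pi) ≤ (q : ℝ) - Real.pi / 2 := by
    rw [← le_div_iff₀ h2pi]; exact h1
  have h2' : (q : ℝ) - Real.pi / 2 < ((k : ℝ) + 1) * (2 * Real.pi) := by
    rw [← div_lt_iff₀ h2pi]; exact h2
  have hb1 : (q : ℝ) ≠ ((1/2 + 2 * k : ℚ) : ℝ) * Real.pi := by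
    apply rat_ne_pi_mul
    intro h
    have : ((1 + 4 * k : ℤ) : ℚ) = 0 := by push_cast; linarith
    have : (1 + 4 * k : ℤ) = 0 := by exact_mod_cast this
    omega
  have hb2 : (q : ℝ) ≠ ((7/6 + 2 * k : ℚ) : ℝ) * Real.pi := by
    apply rat_ne_pi_mul
    intro h
    have : ((7 + 12 * k : ℤ) : ℚ) = 0 := by push_cast; linarith
    have : (7 + 12 * k : ℤ) = 0 := by exact_mod_cast this
    omega
  have hb3 : (q : ℝ) ≠ ((11/6 + 2 * k : ℚ) : ℝ) * Real.pi := by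
    apply rat_ne_pi_mul
    intro h
    have : ((11 + 12 * k : ℤ) : ℚ) = 0 := by push_cast; linarith
    have : (11 + 12 * k : ℤ) = 0 := by exact_mod_cast this
    omega
  push_cast at hb1 hb2 hb3
  have hlo : Real.pi / 2 + 2 * (k : ℝ) * Real.pi < q := by
    rcases lt_or_eq_of_le h1' with h | h
    · linarith
    · exfalso; apply hb1; nlinarith [h]
  rcases lt_trichotomy (q : ℝ) (7 * Real.pi / 6 + 2 * (k : ℝ) * Real.pi) with h | h | h
  · exact Or.inl ⟨k, hlo, h⟩
  · exfalso; apply hb2; rw [h]; ring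
  · rcases lt_trichotomy (q : ℝ) (11 * Real.pi / 6 + 2 * (k : ℝ) * Real.pi) with h' | h' | h'
    · exact Or.inr (Or.inl ⟨k, h, h'⟩)
    · exfalso; apply hb3; rw [h']; ring
    · exact Or.inr (Or.inr ⟨k, h', by linarith⟩)

private lemma disjAB {r : ℝ} (hA : PA r) (hB : PB r) : False := by
  obtain ⟨k, hk1, hk2⟩ := hA; obtain ⟨m, hm1, hm2⟩ := hB
  have h1 : m < k := int_lt_aux (by linarith)
  have h2 : k ≤ m := int_le_aux (by linarith)
  omega

private lemma disjAC {r : ℝ} (hA : PA r) (hC : PC r) : False := by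
  obtain ⟨k, hk1, hk2⟩ := hA; obtain ⟨m, hm1, hm2⟩ := hC
  have h1 : m < k := int_lt_aux (by linarith)
  have h2 : k ≤ m := int_le_aux (by linarith)
  omega

private lemma disjBC {r : ℝ} (hB : PB r) (hC : PC r) : False := by
  obtain ⟨k, hk1, hk2⟩ := hB; obtain ⟨m, hm1, hm2⟩ := hC
  have h1 : m < k := int_lt_aux (by linarith)
  have h2 : k ≤ m := int_le_aux (by linarith)
  omega

/-- Claim A: `d ∈ (2mπ + 2π/3, 2mπ + 2π)` implies `¬ Arr d`. -/
private lemma notArr_mid {d : ℝ} (m : ℤ) (h1 : 2 * (m : ℝ) * Real.pi + 2 * Real.pi / 3 < d)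
    (h2 : d < 2 * (m : ℝ) * Real.pi + 2 * Real.pi) : ¬ Arr d := by
  rintro ⟨k, hk1, hk2⟩
  have ha : m < k := int_lt_aux (by linarith)
  have hb : k ≤ m := int_le_aux (by linarith)
  omega

/-- Claim B: `s - r ∈ (2mπ, 2mπ + 4π/3)` implies `¬ Arr (r - s)`. -/
private lemma notArr_neg {r s : ℝ} (m : ℤ) (h1 : 2 * (m : ℝ) * Real.pi < s - r)
    (h2 : s - r < 2 * (m : ℝ) * Real.pi + 4 * Real.pi / 3) : ¬ Arr (r - s) := by
  rintro ⟨k, hk1, hk2⟩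
  have ha : m + k < 0 := by
    have : 2 * ((m + k : ℤ) : ℝ) * Real.pi < 2 * ((0 : ℤ) : ℝ) * Real.pi := by
      push_cast; linarith
    exact_mod_cast int_lt_aux this
  have hb : (-1 : ℤ) < m + k := by
    have : 2 * ((-1 : ℤ) : ℝ) * Real.pi < 2 * ((m + k : ℤ) : ℝ) * Real.pi := by
      push_cast; linarith
    exact_mod_cast int_lt_aux this
  omega

private lemma window_ne {r s : ℝ} (m : ℤ) (h1 : 2 * (m : ℝ) * Real.pi < s - r)
    (h2 : s - r < 2 * (m : ℝ) * Real.pi + 4 * Real.pi / 3) : r ≠ s := by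
  intro h
  subst h
  have ha : m < 0 := by
    have : 2 * ((m : ℤ) : ℝ) * Real.pi < 2 * ((0 : ℤ) : ℝ) * Real.pi := by push_cast; linarith
    exact_mod_cast int_lt_aux this
  have hb : (-1 : ℤ) < m := by
    have : 2 * ((-1 : ℤ) : ℝ) * Real.pi < 2 * ((m : ℤ) : ℝ) * Real.pi := by
      push_cast; nlinarith [Real.pi_pos]
    exact_mod_cast int_lt_aux this
  omega

private lemma memA_iff (q : ℚ) : Complex.exp (q * Complex.I) ∈ ArcA ↔ PA q := by
  constructor
  · rintro ⟨q', hq', hk⟩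
    rw [expq_inj hq']
    exact hk
  · intro h
    exact ⟨q, rfl, h⟩

private lemma memB_iff (q : ℚ) : Complex.exp (q * Complex.I) ∈ ArcB ↔ PB q := by
  constructor
  · rintro ⟨q', hq', hk⟩
    rw [expq_inj hq']
    exact hk
  · intro h
    exact ⟨q, rfl, h⟩

private lemma memC_iff (q : ℚ) : Complex.exp (q * Complex.I) ∈ ArcC ↔ PC q := by
  constructor
  · rintro ⟨q', hq', hk⟩
    rw [expq_inj hq']
    exact hk
  · intro h
    exact ⟨q, rfl, h⟩

private lemma arrow_iff (q1 q2 : ℚ) :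
    Arrow3 (Complex.exp (q1 * Complex.I)) (Complex.exp (q2 * Complex.I)) ↔
      Arr ((q2 : ℝ) - (q1 : ℝ)) := by
  constructor
  · rintro ⟨a, b, ha, hb, hk⟩
    rw [expq_inj ha, expq_inj hb]
    exact hk
  · intro h
    exact ⟨q1, q2, rfl, rfl, h⟩

private lemma ne_iff (q1 q2 : ℚ) :
    (Complex.exp (q1 * Complex.I) ≠ Complex.exp (q2 * Complex.I)) ↔ q1 ≠ q2 := by
  constructor
  · intro h h'; exact h (by rw [h'])
  · intro h h'; exact h (expq_inj h')

section
variable (a1 a2 b1 b2 c1 c2 d d' ne : Prop)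

private abbrev Tform : Prop :=
  (((a1 ∧ a2) ∨ (b1 ∧ b2) ∨ (c1 ∧ c2)) ∧ d) ∨
  (((a1 ∧ c2) ∨ (c1 ∧ b2) ∨ (b1 ∧ a2)) ∧ d') ∨
  (((c1 ∧ a2) ∨ (b1 ∧ c2) ∨ (a1 ∧ b2)) ∧ (ne ∧ ¬d ∧ ¬d'))

private abbrev Gform : Prop :=
  d ↔ (((a1 ∧ a2) ∨ (b1 ∧ b2) ∨ (c1 ∧ c2)) ∧ Tform a1 a2 b1 b2 c1 c2 d d' ne) ∨
    (((c1 ∧ a2) ∨ (b1 ∧ c2) ∨ (a1 ∧ b2)) ∧ ¬ Tform a1 a2 b1 b2 c1 c2 d d' ne)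

private lemma prop_sameAA (h1 : a1) (h2 : a2) (n1 : ¬b1) (n2 : ¬c1) (n3 : ¬b2) (n4 : ¬c2) :
    Gform a1 a2 b1 b2 c1 c2 d d' ne := by tauto

private lemma prop_sameBB (h1 : b1) (h2 : b2) (n1 : ¬a1) (n2 : ¬c1) (n3 : ¬a2) (n4 : ¬c2) :
    Gform a1 a2 b1 b2 c1 c2 d d' ne := by tauto

private lemma prop_sameCC (h1 : c1) (h2 : c2) (n1 : ¬a1) (n2 : ¬b1) (n3 : ¬a2) (n4 : ¬b2) :
    Gform a1 a2 b1 b2 c1 c2 d d' ne := by tauto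

-- reverse pairs: (a1,c2), (c1,b2), (b1,a2); know ¬d
private lemma prop_revAC (h1 : a1) (h2 : c2) (n1 : ¬b1) (n2 : ¬c1) (n3 : ¬a2) (n4 : ¬b2)
    (hd : ¬d) : Gform a1 a2 b1 b2 c1 c2 d d' ne := by tauto

private lemma prop_revCB (h1 : c1) (h2 : b2) (n1 : ¬a1) (n2 : ¬b1) (n3 : ¬a2) (n4 : ¬c2)
    (hd : ¬d) : Gform a1 a2 b1 b2 c1 c2 d d' ne := by tauto

private lemma prop_revBA (h1 : b1) (h2 : a2) (n1 : ¬a1) (n2 : ¬c1) (n3 : ¬b2) (n4 : ¬c2)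
    (hd : ¬d) : Gform a1 a2 b1 b2 c1 c2 d d' ne := by tauto

-- forward pairs: (c1,a2), (b1,c2), (a1,b2); know ¬d', ne
private lemma prop_fwdCA (h1 : c1) (h2 : a2) (n1 : ¬a1) (n2 : ¬b1) (n3 : ¬b2) (n4 : ¬c2)
    (hd' : ¬d') (hne : ne) : Gform a1 a2 b1 b2 c1 c2 d d' ne := by tauto

private lemma prop_fwdBC (h1 : b1) (h2 : c2) (n1 : ¬a1) (n2 : ¬c1) (n3 : ¬a2) (n4 : ¬b2)
    (hd' : ¬d') (hne : ne) : Gform a1 a2 b1 b2 c1 c2 d d' ne := by tauto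

private lemma prop_fwdAB (h1 : a1) (h2 : b2) (n1 : ¬b1) (n2 : ¬c1) (n3 : ¬a2) (n4 : ¬c2)
    (hd' : ¬d') (hne : ne) : Gform a1 a2 b1 b2 c1 c2 d d' ne := by tauto

end

end ArrowAux

/-- `→` is quantifier-free definable from `(τ, A, B, C)`:
`x → y` iff (`x, y` in the same part and `x τ y`) or
(`(x,y) ∈ (C×A) ∪ (B×C) ∪ (A×B)` and `¬(x τ y)`). -/
theorem arrow_definable_from_tau :
    ∀ x ∈ Scirc, ∀ y ∈ Scirc,
      (Arrow3 x y ↔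
        (((x ∈ ArcA ∧ y ∈ ArcA) ∨ (x ∈ ArcB ∧ y ∈ ArcB) ∨ (x ∈ ArcC ∧ y ∈ ArcC)) ∧
          Tau x y) ∨
        (((x ∈ ArcC ∧ y ∈ ArcA) ∨ (x ∈ ArcB ∧ y ∈ ArcC) ∨ (x ∈ ArcA ∧ y ∈ ArcB)) ∧
          ¬ Tau x y)) := by
  rintro x ⟨q1, rfl⟩ y ⟨q2, rfl⟩
  have hpar : Par3 (Complex.exp (q1 * Complex.I)) (Complex.exp (q2 * Complex.I)) ↔
      (q1 ≠ q2 ∧ ¬ Arr ((q2 : ℝ) - (q1 : ℝ)) ∧ ¬ Arr ((q1 : ℝ) - (q2 : ℝ))) := by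
    unfold Par3
    rw [ne_iff, arrow_iff, arrow_iff]
  simp only [Tau, memA_iff, memB_iff, memC_iff, arrow_iff, hpar]
  rcases cover q1 with h1 | h1 | h1 <;> rcases cover q2 with h2 | h2 | h2
  -- (A,A) same part
  · have n1B : ¬ PB (q1 : ℝ) := fun h => disjAB h1 h
    have n1C : ¬ PC (q1 : ℝ) := fun h => disjAC h1 h
    have n2B : ¬ PB (q2 : ℝ) := fun h => disjAB h2 h
    have n2C : ¬ PC (q2 : ℝ) := fun h => disjAC h2 h
    exact prop_sameAA _ _ _ _ _ _ _ _ _ h1 h2 n1B n1C n2B n2C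
  -- (A,B) forward pair
  · have n1B : ¬ PB (q1 : ℝ) := fun h => disjAB h1 h
    have n1C : ¬ PC (q1 : ℝ) := fun h => disjAC h1 h
    have n2A : ¬ PA (q2 : ℝ) := fun h => disjAB h h2
    have n2C : ¬ PC (q2 : ℝ) := fun h => disjBC h2 h
    have hw : ∃ n : ℤ, 2 * (n : ℝ) * Real.pi < (q2 : ℝ) - (q1 : ℝ) ∧
        (q2 : ℝ) - (q1 : ℝ) < 2 * (n : ℝ) * Real.pi + 4 * Real.pi / 3 := by
      obtain ⟨k, hk1, hk2⟩ := h1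
      obtain ⟨m, hm1, hm2⟩ := h2
      exact ⟨m - k, by push_cast; linarith, by push_cast; linarith⟩
    obtain ⟨n, hn1, hn2⟩ := hw
    have hnar : ¬ Arr ((q1 : ℝ) - (q2 : ℝ)) := notArr_neg n hn1 hn2
    have hne : q1 ≠ q2 := by
      have := window_ne n hn1 hn2
      intro h
      exact this (by rw [h])
    exact prop_fwdAB _ _ _ _ _ _ _ _ _ h1 h2 n1B n1C n2A n2C hnar hne
  -- (A,C) reverse pair
  · have n1B : ¬ PB (q1 : ℝ) := fun h => disjAB h1 h
    have n1C : ¬ PC (q1 : ℝ) := fun h => disjAC h1 h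
    have n2A : ¬ PA (q2 : ℝ) := fun h => disjAC h h2
    have n2B : ¬ PB (q2 : ℝ) := fun h => disjBC h h2
    have hmid : ¬ Arr ((q2 : ℝ) - (q1 : ℝ)) := by
      obtain ⟨k, hk1, hk2⟩ := h1
      obtain ⟨m, hm1, hm2⟩ := h2
      exact notArr_mid (m - k) (by push_cast; linarith) (by push_cast; linarith)
    exact prop_revAC _ _ _ _ _ _ _ _ _ h1 h2 n1B n1C n2A n2B hmid
  -- (B,A) reverse pair
  · have n1A : ¬ PA (q1 : ℝ) := fun h => disjAB h h1
    have n1C : ¬ PC (q1 : ℝ) := fun h => disjBC h1 h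
    have n2B : ¬ PB (q2 : ℝ) := fun h => disjAB h2 h
    have n2C : ¬ PC (q2 : ℝ) := fun h => disjAC h2 h
    have hmid : ¬ Arr ((q2 : ℝ) - (q1 : ℝ)) := by
      obtain ⟨k, hk1, hk2⟩ := h1
      obtain ⟨m, hm1, hm2⟩ := h2
      exact notArr_mid (m - k - 1) (by push_cast; linarith) (by push_cast; linarith)
    exact prop_revBA _ _ _ _ _ _ _ _ _ h1 h2 n1A n1C n2B n2C hmid
  -- (B,B) same part
  · have n1A : ¬ PA (q1 : ℝ) := fun h => disjAB h h1
    have n1C : ¬ PC (q1 : ℝ) := fun h => disjBC h1 h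
    have n2A : ¬ PA (q2 : ℝ) := fun h => disjAB h h2
    have n2C : ¬ PC (q2 : ℝ) := fun h => disjBC h2 h
    exact prop_sameBB _ _ _ _ _ _ _ _ _ h1 h2 n1A n1C n2A n2C
  -- (B,C) forward pair
  · have n1A : ¬ PA (q1 : ℝ) := fun h => disjAB h h1
    have n1C : ¬ PC (q1 : ℝ) := fun h => disjBC h1 h
    have n2A : ¬ PA (q2 : ℝ) := fun h => disjAC h h2
    have n2B : ¬ PB (q2 : ℝ) := fun h => disjBC h h2
    have hw : ∃ n : ℤ, 2 * (n : ℝ) * Real.pi < (q2 : ℝ) - (q1 : ℝ) ∧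
        (q2 : ℝ) - (q1 : ℝ) < 2 * (n : ℝ) * Real.pi + 4 * Real.pi / 3 := by
      obtain ⟨k, hk1, hk2⟩ := h1
      obtain ⟨m, hm1, hm2⟩ := h2
      exact ⟨m - k, by push_cast; linarith, by push_cast; linarith⟩
    obtain ⟨n, hn1, hn2⟩ := hw
    have hnar : ¬ Arr ((q1 : ℝ) - (q2 : ℝ)) := notArr_neg n hn1 hn2
    have hne : q1 ≠ q2 := by
      have := window_ne n hn1 hn2
      intro h
      exact this (by rw [h])
    exact prop_fwdBC _ _ _ _ _ _ _ _ _ h1 h2 n1A n1C n2A n2B hnar hne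
  -- (C,A) forward pair
  · have n1A : ¬ PA (q1 : ℝ) := fun h => disjAC h h1
    have n1B : ¬ PB (q1 : ℝ) := fun h => disjBC h h1
    have n2B : ¬ PB (q2 : ℝ) := fun h => disjAB h2 h
    have n2C : ¬ PC (q2 : ℝ) := fun h => disjAC h2 h
    have hw : ∃ n : ℤ, 2 * (n : ℝ) * Real.pi < (q2 : ℝ) - (q1 : ℝ) ∧
        (q2 : ℝ) - (q1 : ℝ) < 2 * (n : ℝ) * Real.pi + 4 * Real.pi / 3 := by
      obtain ⟨k, hk1, hk2⟩ := h1
      obtain ⟨m, hm1, hm2⟩ := h2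
      exact ⟨m - k - 1, by push_cast; linarith, by push_cast; linarith⟩
    obtain ⟨n, hn1, hn2⟩ := hw
    have hnar : ¬ Arr ((q1 : ℝ) - (q2 : ℝ)) := notArr_neg n hn1 hn2
    have hne : q1 ≠ q2 := by
      have := window_ne n hn1 hn2
      intro h
      exact this (by rw [h])
    exact prop_fwdCA _ _ _ _ _ _ _ _ _ h1 h2 n1A n1B n2B n2C hnar hne
  -- (C,B) reverse pair
  · have n1A : ¬ PA (q1 : ℝ) := fun h => disjAC h h1
    have n1B : ¬ PB (q1 : ℝ) := fun h => disjBC h h1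
    have n2A : ¬ PA (q2 : ℝ) := fun h => disjAB h h2
    have n2C : ¬ PC (q2 : ℝ) := fun h => disjBC h2 h
    have hmid : ¬ Arr ((q2 : ℝ) - (q1 : ℝ)) := by
      obtain ⟨k, hk1, hk2⟩ := h1
      obtain ⟨m, hm1, hm2⟩ := h2
      exact notArr_mid (m - k - 1) (by push_cast; linarith) (by push_cast; linarith)
    exact prop_revCB _ _ _ _ _ _ _ _ _ h1 h2 n1A n1B n2A n2C hmid
  -- (C,C) same part
  · have n1A : ¬ PA (q1 : ℝ) := fun h => disjAC h h1
    have n1B : ¬ PB (q1 : ℝ) := fun h => disjBC h h1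
    have n2A : ¬ PA (q2 : ℝ) := fun h => disjAC h h2
    have n2B : ¬ PB (q2 : ℝ) := fun h => disjBC h h2
    exact prop_sameCC _ _ _ _ _ _ _ _ _ h1 h2 n1A n1B n2A n2B
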